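/- For every integer i ≥ 2, the identity 6 · ∑_{m=0}^{2i−2} ((m : ℤ) − (i − 1))² · A(2i−1, m) = (2i−1)! · i holds. Equivalently, the mean of the squared linking number of two disjoint monotonic cycles with i interior edges each, taken over all random book embeddings, is i/6. -/

import Mathlib

/-! Write `Y_k = ±1` for the direction of `σ` between positions `k` and `k + 1` of `Fin n`,
so that `∑ Y_k = 2 · asc σ - (n - 1)`. Summed over all permutations, `Y_k Y_l` gives `n!` for
`k = l` and `0` when the positions `k, k + 1, l, l + 1` are distinct (composing with the
transposition of `k` and `k + 1` flips its sign). For `l = k + 1` it gives `-n!/3`: the three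
products of signs around three distinct positions always add up to `-1`, and a 3-cycle
permutes them. Hence
`∑_σ (2 · asc σ - (n - 1))² = n! ((n - 1) - 2 (n - 2)/3) = n! (n + 1)/3`,
which for `n = 2i - 1` is the claim. -/

/-- The Eulerian number `A(n, m)`: the number of permutations of `Fin n` with exactly
`m` ascents, where an ascent of `σ` is an index `k` with `k + 1 < n` and `σ k < σ (k+1)`. -/
def eulerian (n m : ℕ) : ℕ :=
  (Finset.univ.filter (fun σ : Equiv.Perm (Fin n) =>
    (Finset.univ.filter (fun k : Fin n =>
      ∃ h : (k : ℕ) + 1 < n, σ k < σ ⟨(k : ℕ) + 1, h⟩)).card = m)).card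

open Finset

theorem Fin.sum_sum_ite_val_add_one_eq (m : ℕ) :
    ∑ k : Fin m, ∑ l : Fin m, (if (k : ℕ) + 1 = l then 1 else 0 : ℤ) = (m - 1 : ℕ) := by
  have inner : ∀ k : Fin m, ∑ l : Fin m, (if (k : ℕ) + 1 = l then 1 else 0 : ℤ)
      = if (k : ℕ) + 1 < m then 1 else 0 := by
    intro k
    rw [Fin.sum_univ_eq_sum_range (fun l => if (k : ℕ) + 1 = l then (1 : ℤ) else 0)]
    simp
  have adjacent : {k ∈ range m | k + 1 < m} = range (m - 1) := by
    ext k; simp only [mem_filter, mem_range]; omega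
  rw [sum_congr rfl fun k _ => inner k,
    Fin.sum_univ_eq_sum_range (fun k => if k + 1 < m then (1 : ℤ) else 0), sum_boole, adjacent,
    card_range]

namespace Equiv.Perm

variable {α : Type*} [LinearOrder α]

def ascSign (σ : Perm α) (a b : α) : ℤ := if σ a < σ b then 1 else -1

theorem ascSign_mul (σ τ : Perm α) (a b : α) :
    (σ * τ).ascSign a b = σ.ascSign (τ a) (τ b) := rfl

theorem ascSign_mul_self (σ : Perm α) (a b : α) : σ.ascSign a b * σ.ascSign a b = 1 := by
  unfold ascSign; split_ifs <;> norm_num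

theorem ascSign_comm (σ : Perm α) {a b : α} (hab : a ≠ b) :
    σ.ascSign b a = -σ.ascSign a b := by
  unfold ascSign
  rcases (σ.injective.ne hab).lt_or_gt with h | h <;> simp [h, h.not_gt]

theorem ascSign_cycle (σ : Perm α) {a b c : α} (hab : a ≠ b) (hbc : b ≠ c) (hca : c ≠ a) :
    σ.ascSign a b * σ.ascSign b c + σ.ascSign b c * σ.ascSign c a
      + σ.ascSign c a * σ.ascSign a b = -1 := by
  have := σ.injective.ne hab
  have := σ.injective.ne hbc
  have := σ.injective.ne hca
  unfold ascSign
  split_ifs <;> first | order | norm_num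

variable [Fintype α] [DecidableEq α]

theorem sum_ascSign_mul_ascSign_eq_zero {a b c d : α} (hab : a ≠ b)
    (hca : c ≠ a) (hcb : c ≠ b) (hda : d ≠ a) (hdb : d ≠ b) :
    ∑ σ : Perm α, σ.ascSign a b * σ.ascSign c d = 0 := by
  have h := Equiv.sum_comp (Equiv.mulRight (swap a b)) fun σ => σ.ascSign a b * σ.ascSign c d
  simp only [coe_mulRight, ascSign_mul, swap_apply_left, swap_apply_right,
    swap_apply_of_ne_of_ne hca hcb, swap_apply_of_ne_of_ne hda hdb, ascSign_comm _ hab,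
    neg_mul, sum_neg_distrib] at h
  linarith

theorem three_mul_sum_ascSign_mul_ascSign {a b c : α}
    (hab : a ≠ b) (hbc : b ≠ c) (hca : c ≠ a) :
    3 * ∑ σ : Perm α, σ.ascSign a b * σ.ascSign b c = -(Fintype.card α).factorial := by
  -- composing with the 3-cycle `x ↦ y ↦ z ↦ x` rotates the three products of `ascSign_cycle`
  have rotate : ∀ {x y z : α}, x ≠ y → y ≠ z → z ≠ x →
      ∑ σ : Perm α, σ.ascSign x y * σ.ascSign y z
        = ∑ σ : Perm α, σ.ascSign y z * σ.ascSign z x := by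
    intro x y z hxy hyz hzx
    rw [← Equiv.sum_comp (Equiv.mulRight (swap x y * swap y z))]
    simp [ascSign_mul, swap_apply_of_ne_of_ne hzx hyz.symm, swap_apply_of_ne_of_ne hxy hzx.symm]
  have cycle := Finset.sum_congr rfl fun σ (_ : σ ∈ univ) => ascSign_cycle σ hab hbc hca
  simp only [sum_add_distrib, sum_const, card_univ, Fintype.card_perm, smul_neg, nsmul_eq_mul,
    mul_one] at cycle
  linarith [rotate hab hbc hca, rotate hbc hca hab]

def ascents {n : ℕ} (σ : Perm (Fin n)) : Finset (Fin n) :=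
  {k | ∃ h : (k : ℕ) + 1 < n, σ k < σ ⟨(k : ℕ) + 1, h⟩}

variable {m : ℕ}

theorem card_ascents (σ : Perm (Fin (m + 1))) :
    #σ.ascents = #{k : Fin m | σ k.castSucc < σ k.succ} := by
  rw [ascents, card_filter, card_filter, Fin.sum_univ_castSucc]
  simp [Fin.succ]

theorem sum_ascSign_castSucc_succ (σ : Perm (Fin (m + 1))) :
    ∑ k : Fin m, σ.ascSign k.castSucc k.succ = 2 * #σ.ascents - m := by
  have h : ∀ k : Fin m, σ.ascSign k.castSucc k.succ
      = 2 * (if σ k.castSucc < σ k.succ then 1 else 0) - 1 := by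
    intro k; unfold ascSign; split_ifs <;> norm_num
  simp only [h, sum_sub_distrib, ← mul_sum, sum_boole, card_ascents]
  simp

theorem three_mul_sum_ascSign_castSucc_succ_mul (k l : Fin m) :
    3 * ∑ σ : Perm (Fin (m + 1)), σ.ascSign k.castSucc k.succ * σ.ascSign l.castSucc l.succ
      = (m + 1).factorial * (3 * (if k = l then 1 else 0)
          - (if (k : ℕ) + 1 = l then 1 else 0) - (if (l : ℕ) + 1 = k then 1 else 0)) := by
  have path : ∀ k l : Fin m, (k : ℕ) + 1 = l →
      3 * ∑ σ : Perm (Fin (m + 1)), σ.ascSign k.castSucc k.succ * σ.ascSign l.castSucc l.succ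
        = -(m + 1).factorial := by
    intro k l hkl
    have hsucc : k.succ = l.castSucc := Fin.ext hkl
    rw [hsucc, three_mul_sum_ascSign_mul_ascSign, Fintype.card_fin] <;>
      simp [Fin.ext_iff] <;> omega
  by_cases hkl : k = l
  · subst hkl
    simp [ascSign_mul_self, Fintype.card_perm, mul_comm]
  by_cases hadj : (k : ℕ) + 1 = l
  · simp [hkl, hadj, path k l hadj, show (l : ℕ) + 1 ≠ k by omega]
  by_cases hadj' : (l : ℕ) + 1 = k
  · simp_rw [mul_comm (ascSign _ k.castSucc _)]
    simp [hkl, hadj, hadj', path l k hadj']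
  have hkl' : (k : ℕ) ≠ l := Fin.val_ne_of_ne hkl
  rw [sum_ascSign_mul_ascSign_eq_zero] <;> simp [hkl, hadj, hadj', Fin.ext_iff] <;> omega

theorem three_mul_sum_sq_sum_ascSign (hm : m ≠ 0) :
    3 * ∑ σ : Perm (Fin (m + 1)), (∑ k : Fin m, σ.ascSign k.castSucc k.succ) ^ 2
      = (m + 1).factorial * (m + 2) := by
  calc 3 * ∑ σ : Perm (Fin (m + 1)), (∑ k : Fin m, σ.ascSign k.castSucc k.succ) ^ 2
      = ∑ k : Fin m, ∑ l : Fin m, 3 * ∑ σ : Perm (Fin (m + 1)),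
          σ.ascSign k.castSucc k.succ * σ.ascSign l.castSucc l.succ := by
        simp_rw [sq, sum_mul_sum, mul_sum]
        rw [sum_comm]
        exact sum_congr rfl fun k _ => sum_comm
    _ = (m + 1).factorial * (3 * m - 2 * (m - 1 : ℕ)) := by
        simp_rw [three_mul_sum_ascSign_castSucc_succ_mul, ← mul_sum, sum_sub_distrib, ← mul_sum]
        rw [sum_comm (f := fun k l : Fin m => if (l : ℕ) + 1 = k then (1 : ℤ) else 0),
          Fin.sum_sum_ite_val_add_one_eq]
        simp only [sum_ite_eq, mem_univ, ↓reduceIte, sum_const, card_univ, Fintype.card_fin,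
          nsmul_eq_mul, mul_one]
        ring
    _ = (m + 1).factorial * (m + 2) := by
        congr 1; omega

theorem sum_mul_eulerian (f : ℕ → ℤ) :
    ∑ a ∈ range (m + 1), f a * eulerian (m + 1) a
      = ∑ σ : Perm (Fin (m + 1)), f #σ.ascents := by
  have maps_to : ∀ σ ∈ (univ : Finset (Perm (Fin (m + 1)))),
      #σ.ascents ∈ range (m + 1) := by
    intro σ _
    rw [mem_range, Nat.lt_succ_iff, card_ascents]
    exact (card_filter_le _ _).trans (card_fin m).le
  rw [← sum_fiberwise_of_maps_to' maps_to]
  refine sum_congr rfl fun a _ => ?_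
  rw [sum_const, nsmul_eq_mul, mul_comm]
  rfl

end Equiv.Perm

open Equiv.Perm in
/-- For every integer `i ≥ 2`, `6 · ∑_{m=0}^{2i-2} (m - (i-1))² · A(2i-1, m) = (2i-1)! · i`;
equivalently, the mean squared linking number of two disjoint monotonic cycles with `i`
interior edges each, over all random book embeddings, is `i / 6`. -/
theorem mean_squared_linking (i : ℕ) (hi : 2 ≤ i) :
    6 * ∑ m ∈ Finset.range (2 * i - 1),
        ((m : ℤ) - ((i : ℤ) - 1)) ^ 2 * eulerian (2 * i - 1) m
      = ((2 * i - 1).factorial : ℤ) * i := by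
  obtain ⟨j, rfl⟩ : ∃ j, i = j + 1 := ⟨i - 1, by omega⟩
  rw [show 2 * (j + 1) - 1 = 2 * j + 1 by omega, sum_mul_eulerian]
  have variance := three_mul_sum_sq_sum_ascSign (m := 2 * j) (by omega)
  simp_rw [sum_ascSign_castSucc_succ] at variance
  push_cast at variance ⊢
  have centred : ∀ a : ℤ, (2 * a - 2 * j) ^ 2 = 4 * (a - (j + 1 - 1)) ^ 2 := fun a => by ring
  simp_rw [centred, ← mul_sum] at variance
  linarith
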